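/- arXiv:2208.05535 — 4 statements merged into one kernel-verified Lean document; each statement's English description precedes it below -/
import Mathlib

section
/- Define r_bind(b_L, b_R) = (∫ B(γ+b_L−p)g(γ)dγ) / (∫ (1 − B(p+γ+b_R) + B(γ+b_L−p)) g(γ)dγ), where B is a strictly increasing CDF with values in (0,1) and g a probability density. Then r_bind is strictly increasing in b_R and strictly increasing in b_L. -/
open MeasureTheory

/-
Write `N a = ∫ B (γ + a) g(γ) dγ`. Since `B` is strictly increasing and `g > 0`, `N` is strictly
increasing and positive, and `C a = ∫ (1 - B (γ + a)) g(γ) dγ = ∫ g - N a` is positive and strictly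
decreasing. The threshold is `N (b_L - p) / (C (p + b_R) + N (b_L - p))`: in `b_R` only the positive
denominator decreases, and in `b_L` it has the shape `x / (c + x)` with `c > 0`, increasing in `x > 0`.
-/

section Integral

variable {α : Type*} [MeasurableSpace α] {μ : Measure α} [NeZero μ]

theorem integral_pos_of_forall_pos {f : α → ℝ} (hf : ∀ x, 0 < f x) (hfi : Integrable f μ) :
    0 < ∫ x, f x ∂μ := by
  rw [integral_pos_iff_support_of_nonneg (fun x ↦ (hf x).le) hfi,
    Function.support_eq_univ fun x ↦ (hf x).ne']
  exact pos_iff_ne_zero.2 (Measure.measure_univ_ne_zero.2 (NeZero.ne μ))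

theorem integral_lt_integral_of_forall_lt {f g : α → ℝ} (hfg : ∀ x, f x < g x)
    (hfi : Integrable f μ) (hgi : Integrable g μ) : ∫ x, f x ∂μ < ∫ x, g x ∂μ := by
  have := integral_pos_of_forall_pos (μ := μ) (fun x ↦ sub_pos.2 (hfg x)) (hgi.sub hfi)
  rwa [integral_sub hgi hfi, sub_pos] at this

end Integral

theorem strictMono_div_add_self {f : ℝ → ℝ} (hf : StrictMono f) (hpos : ∀ x, 0 < f x) {c : ℝ}
    (hc : 0 < c) : StrictMono fun x ↦ f x / (c + f x) := by
  intro x y hxy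
  have hlt := hf hxy
  rw [div_lt_div_iff₀ (by linarith [hpos x]) (by linarith [hpos y])]
  nlinarith

theorem strictMono_div_of_strictAnti {d : ℝ → ℝ} (hd : StrictAnti d) (hpos : ∀ x, 0 < d x)
    {n : ℝ} (hn : 0 < n) : StrictMono fun x ↦ n / (d x + n) := by
  intro x y hxy
  have hlt := hd hxy
  exact div_lt_div_of_pos_left hn (by linarith [hpos y]) (by linarith)

section Shift

variable {B g : ℝ → ℝ}

theorem strictMono_integral_comp_add_mul (hBm : StrictMono B) (hgpos : ∀ x, 0 < g x)
    (hint : ∀ a, Integrable (fun γ ↦ B (γ + a) * g γ)) :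
    StrictMono fun a ↦ ∫ γ, B (γ + a) * g γ := fun a b hab ↦
  integral_lt_integral_of_forall_lt
    (fun x ↦ mul_lt_mul_of_pos_right (hBm (add_lt_add_right hab x)) (hgpos x)) (hint a) (hint b)

theorem integral_comp_add_mul_pos (hB : ∀ z, 0 < B z) (hgpos : ∀ x, 0 < g x)
    (hint : ∀ a, Integrable (fun γ ↦ B (γ + a) * g γ)) (a : ℝ) :
    0 < ∫ γ, B (γ + a) * g γ :=
  integral_pos_of_forall_pos (fun x ↦ mul_pos (hB _) (hgpos x)) (hint a)

theorem integral_comp_add_mul_lt_integral (hB : ∀ z, B z < 1) (hgpos : ∀ x, 0 < g x)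
    (hgi : Integrable g) (hint : ∀ a, Integrable (fun γ ↦ B (γ + a) * g γ)) (a : ℝ) :
    ∫ γ, B (γ + a) * g γ < ∫ γ, g γ :=
  integral_lt_integral_of_forall_lt
    (fun x ↦ mul_lt_of_lt_one_left (hgpos x) (hB _)) (hint a) hgi

theorem integral_one_sub_add_mul (hgi : Integrable g)
    (hint : ∀ a, Integrable (fun γ ↦ B (γ + a) * g γ)) (p bL bR : ℝ) :
    ∫ γ, (1 - B (p + γ + bR) + B (γ + bL - p)) * g γ =
      ((∫ γ, g γ) - ∫ γ, B (γ + (p + bR)) * g γ) + ∫ γ, B (γ + (bL - p)) * g γ := by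
  have hC : Integrable (fun γ ↦ g γ - B (γ + (p + bR)) * g γ) := hgi.sub (hint _)
  rw [← integral_sub hgi (hint _), ← integral_add hC (hint _)]
  congr 1 with γ
  rw [add_comm p, add_assoc, add_sub_assoc]
  ring

end Shift

theorem stmt_4_general (B g : ℝ → ℝ) (hBm : StrictMono B) (hB01 : ∀ z, 0 < B z ∧ B z < 1)
    (hgpos : ∀ x, 0 < g x) (hgi : Integrable g)
    (p : ℝ)
    (hint : ∀ a : ℝ, Integrable (fun γ => B (γ + a) * g γ)) :
    (∀ bL : ℝ, StrictMono (fun bR : ℝ =>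
        (∫ γ, B (γ + bL - p) * g γ) /
          (∫ γ, (1 - B (p + γ + bR) + B (γ + bL - p)) * g γ))) ∧
    (∀ bR : ℝ, StrictMono (fun bL : ℝ =>
        (∫ γ, B (γ + bL - p) * g γ) /
          (∫ γ, (1 - B (p + γ + bR) + B (γ + bL - p)) * g γ))) := by
  set N : ℝ → ℝ := fun a ↦ ∫ γ, B (γ + a) * g γ
  set C : ℝ → ℝ := fun a ↦ (∫ γ, g γ) - N a
  have hN : StrictMono N := strictMono_integral_comp_add_mul hBm hgpos hint
  have hNpos : ∀ a, 0 < N a := integral_comp_add_mul_pos (fun z ↦ (hB01 z).1) hgpos hint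
  have hCpos : ∀ a, 0 < C a := fun a ↦
    sub_pos.2 (integral_comp_add_mul_lt_integral (fun z ↦ (hB01 z).2) hgpos hgi hint a)
  have hr : ∀ bL bR, (∫ γ, B (γ + bL - p) * g γ) /
      (∫ γ, (1 - B (p + γ + bR) + B (γ + bL - p)) * g γ) =
        N (bL - p) / (C (p + bR) + N (bL - p)) := by
    intro bL bR
    rw [integral_one_sub_add_mul hgi hint]
    simp only [N, C, add_sub_assoc]
  simp only [hr]
  constructor
  · intro bL
    exact strictMono_div_of_strictAnti (fun x y hxy ↦ sub_lt_sub_left (hN (by linarith)) _)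
      (fun _ ↦ hCpos _) (hNpos _)
  · intro bR
    exact strictMono_div_add_self (fun x y hxy ↦ hN (sub_lt_sub_right hxy p)) (fun _ ↦ hNpos _)
      (hCpos _)

/-- The binding-referendum threshold r_bind is strictly increasing in b_R and in b_L. -/
theorem stmt_4 (B g : ℝ → ℝ) (hBm : StrictMono B) (hB01 : ∀ z, 0 < B z ∧ B z < 1)
    (hgpos : ∀ x, 0 < g x) (hg1 : ∫ x, g x = 1) (hgi : Integrable g)
    (p : ℝ)
    (hint : ∀ a : ℝ, Integrable (fun γ => B (γ + a) * g γ)) :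
    (∀ bL : ℝ, StrictMono (fun bR : ℝ =>
        (∫ γ, B (γ + bL - p) * g γ) /
          (∫ γ, (1 - B (p + γ + bR) + B (γ + bL - p)) * g γ))) ∧
    (∀ bR : ℝ, StrictMono (fun bL : ℝ =>
        (∫ γ, B (γ + bL - p) * g γ) /
          (∫ γ, (1 - B (p + γ + bR) + B (γ + bL - p)) * g γ))) :=
  stmt_4_general B g hBm hB01 hgpos hgi p hint
end

section
/- Let b : ℝ → ℝ be a continuously differentiable probability density with b(u) = b(−u) for all u and b nonincreasing on [0,∞), and let g : ℝ → ℝ be a probability density with g(x) = g(−x) for all x, g nondecreasing on (−∞,0] and nonincreasing on [0,∞). If κ > 0 then ∫_{-∞}^{∞} b'(−κ − γ) g(γ) dγ ≥ 0. -/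
open MeasureTheory Set

/-- Key step for the polarization comparative static: the integral of b'(−κ−γ) against
a symmetric unimodal density g is nonnegative when κ > 0. -/
theorem stmt_5 (b g : ℝ → ℝ)
    (hb : ContDiff ℝ 1 b) (hbnn : ∀ u, 0 ≤ b u) (hb1 : ∫ u, b u = 1)
    (hbsym : ∀ u, b u = b (-u)) (hbdec : AntitoneOn b (Ici (0 : ℝ)))
    (hgnn : ∀ x, 0 ≤ g x) (hg1 : ∫ x, g x = 1) (hgsym : ∀ x, g x = g (-x))
    (hginc : MonotoneOn g (Iic (0 : ℝ))) (hgdec : AntitoneOn g (Ici (0 : ℝ)))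
    (κ : ℝ) (hκ : 0 < κ)
    (hint : Integrable (fun γ => deriv b (-κ - γ) * g γ)) :
    0 ≤ ∫ γ, deriv b (-κ - γ) * g γ := by
  -- oddness of deriv b
  have hodd : ∀ u : ℝ, deriv b u = -deriv b (-u) := by
    intro u
    have hbe : b = fun x => b (-x) := funext hbsym
    conv_lhs => rw [hbe]
    exact deriv_comp_neg b u
  -- deriv b nonpositive on positive reals
  have hderiv_nonpos : ∀ x : ℝ, 0 < x → deriv b x ≤ 0 := by
    intro x hx
    have hdiff : HasDerivAt b (deriv b x) x :=
      ((hb.differentiable one_ne_zero) x).hasDerivAt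
    have htend : Filter.Tendsto (slope b x) (nhdsWithin x (Ioi x)) (nhds (deriv b x)) :=
      ((hasDerivAt_iff_tendsto_slope.mp hdiff).mono_left
        (nhdsWithin_mono x (fun y hy => ne_of_gt hy)))
    refine le_of_tendsto htend ?_
    filter_upwards [self_mem_nhdsWithin] with y hy
    have hby : b y ≤ b x := hbdec (le_of_lt hx) (le_of_lt (hx.trans hy)) (le_of_lt hy)
    have : b y - b x ≤ 0 := by linarith
    have hyx : 0 < y - x := by simp only [mem_Ioi] at hy; linarith
    rw [slope_def_field]
    have : (b y - b x) / (y - x) ≤ 0 := div_nonpos_of_nonpos_of_nonneg this hyx.le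
    simpa [div_eq_inv_mul] using this
  set F : ℝ → ℝ := fun u => deriv b u * g (-κ - u) with hF
  have hFG : ∀ u : ℝ, deriv b (-κ - (-κ - u)) * g (-κ - u) = F u := by
    intro u
    have : -κ - (-κ - u) = u := by ring
    rw [this]
  -- Integrability of F
  have hFint : Integrable F := by
    have := hint.comp_sub_left (-κ)
    simpa only [hFG] using this
  -- change of variables
  have hsub : ∫ γ, deriv b (-κ - γ) * g γ = ∫ u, F u := by
    rw [← integral_sub_left_eq_self (fun γ => deriv b (-κ - γ) * g γ) volume (-κ)]
    exact integral_congr_ae (Filter.Eventually.of_forall fun u => hFG u)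
  rw [hsub]
  -- split the integral
  have hsplit : (∫ u in Iic (0:ℝ), F u) + ∫ u in Ioi (0:ℝ), F u = ∫ u, F u :=
    intervalIntegral.integral_Iic_add_Ioi hFint.integrableOn hFint.integrableOn
  have hrefl : (∫ u in Iic (0:ℝ), F u) = ∫ x in Ioi (0:ℝ), F (-x) := by
    rw [integral_comp_neg_Ioi]
    norm_num
  have hcomb : (∫ x in Ioi (0:ℝ), F (-x)) + ∫ x in Ioi (0:ℝ), F x
      = ∫ x in Ioi (0:ℝ), (F (-x) + F x) := by
    rw [← integral_add]
    · exact (hFint.comp_neg).integrableOn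
    · exact hFint.integrableOn
  rw [← hsplit, hrefl, hcomb]
  refine setIntegral_nonneg measurableSet_Ioi ?_
  intro x hx
  have hx0 : (0:ℝ) < x := hx
  -- pointwise nonnegativity
  have h1 : F (-x) + F x = deriv b x * (g (-κ - x) - g (x - κ)) := by
    have e1 : deriv b (-x) = -deriv b x := by
      rw [hodd (-x), neg_neg]
    simp only [hF]
    rw [e1]
    have e2 : -κ - -x = x - κ := by ring
    rw [e2]
    ring
  rw [h1]
  have hd : deriv b x ≤ 0 := hderiv_nonpos x hx0
  have hg2 : g (-κ - x) ≤ g (x - κ) := by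
    have e3 : g (-κ - x) = g (κ + x) := by
      rw [hgsym (κ + x)]; congr 1; ring
    rw [e3]
    rcases le_or_gt κ x with hcase | hcase
    · exact hgdec (by simp; linarith) (by simp; linarith) (by linarith)
    · have e4 : g (x - κ) = g (κ - x) := by
        rw [hgsym (κ - x)]; congr 1; ring
      rw [e4]
      exact hgdec (by simp; linarith) (by simp; linarith) (by linarith)
  have : g (-κ - x) - g (x - κ) ≤ 0 := by linarith
  exact mul_nonneg_of_nonpos_of_nonpos hd this
end

section
/- Let B : ℝ → ℝ be a CDF with 0 < B(x) < 1 for all x, g a probability density with full support, p ∈ ℝ, and b_L < b_R < 0. Define D̄(r) = ∫_{−b_R}^{−b_L} ((1−r) B(γ+b_L−p) − r B(−p−γ−b_R)) g(γ) dγ. Then D̄ is strictly decreasing in r, D̄(0) > 0, and D̄(1) < 0, so there exists a unique r* ∈ (0,1) with D̄(r) > 0 if and only if r < r*. -/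
open MeasureTheory Set intervalIntegral

/-- The non-binding referendum net benefit D̄(r) (parties initially aligned,
b_L < b_R < 0) is strictly decreasing, positive at 0, negative at 1, with a unique
interior threshold r*. -/
theorem stmt_8 (B g : ℝ → ℝ) (hBmono : Monotone B) (hB01 : ∀ z, 0 < B z ∧ B z < 1)
    (hgpos : ∀ x, 0 < g x) (hg1 : ∫ x, g x = 1) (hgi : Integrable g)
    (p bL bR : ℝ) (h1 : bL < bR) (h2 : bR < 0) :
    StrictAnti (fun r : ℝ =>
        ∫ γ in (-bR)..(-bL), ((1 - r) * B (γ + bL - p) - r * B (-p - γ - bR)) * g γ) ∧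
    (∫ γ in (-bR)..(-bL), ((1 - (0:ℝ)) * B (γ + bL - p) - 0 * B (-p - γ - bR)) * g γ) > 0 ∧
    (∫ γ in (-bR)..(-bL), ((1 - (1:ℝ)) * B (γ + bL - p) - 1 * B (-p - γ - bR)) * g γ) < 0 ∧
    ∃! rs : ℝ, rs ∈ Ioo (0 : ℝ) 1 ∧
      ∀ r : ℝ,
        (∫ γ in (-bR)..(-bL), ((1 - r) * B (γ + bL - p) - r * B (-p - γ - bR)) * g γ) > 0
          ↔ r < rs := by
  have hab : (-bR) < (-bL) := by linarith
  -- measurability of the two shifted B's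
  have hBm : Measurable B := hBmono.measurable
  have hm1 : AEStronglyMeasurable (fun γ : ℝ => B (γ + bL - p)) volume :=
    (hBm.comp ((measurable_id.add_const bL).sub_const p)).aestronglyMeasurable
  have hm2 : AEStronglyMeasurable (fun γ : ℝ => B (-p - γ - bR)) volume :=
    (hBm.comp (((measurable_const.sub measurable_id).sub_const bR))).aestronglyMeasurable
  have hbd : ∀ f : ℝ → ℝ, (∀ z, 0 < f z ∧ f z < 1) → ∃ C, ∀ x, ‖f x‖ ≤ C := by
    intro f hf
    exact ⟨1, fun x => by rw [Real.norm_eq_abs, abs_of_pos (hf x).1]; exact (hf x).2.le⟩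
  have hI1 : IntervalIntegrable (fun γ => B (γ + bL - p) * g γ) volume (-bR) (-bL) :=
    (hgi.bdd_mul hm1 (Filter.Eventually.of_forall (hbd (fun γ => B (γ + bL - p)) (fun z => hB01 _)).choose_spec)).intervalIntegrable
  have hI2 : IntervalIntegrable (fun γ => B (-p - γ - bR) * g γ) volume (-bR) (-bL) :=
    (hgi.bdd_mul hm2 (Filter.Eventually.of_forall (hbd (fun γ => B (-p - γ - bR)) (fun z => hB01 _)).choose_spec)).intervalIntegrable
  set A := ∫ γ in (-bR)..(-bL), B (γ + bL - p) * g γ with hAdef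
  set C := ∫ γ in (-bR)..(-bL), B (-p - γ - bR) * g γ with hCdef
  have hA : 0 < A :=
    intervalIntegral.intervalIntegral_pos_of_pos_on hI1
      (fun x _ => mul_pos (hB01 _).1 (hgpos _)) hab
  have hC : 0 < C :=
    intervalIntegral.intervalIntegral_pos_of_pos_on hI2
      (fun x _ => mul_pos (hB01 _).1 (hgpos _)) hab
  have key : ∀ r : ℝ,
      (∫ γ in (-bR)..(-bL), ((1 - r) * B (γ + bL - p) - r * B (-p - γ - bR)) * g γ)
        = A - r * (A + C) := by
    intro r
    have : (∫ γ in (-bR)..(-bL), ((1 - r) * B (γ + bL - p) - r * B (-p - γ - bR)) * g γ)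
        = ∫ γ in (-bR)..(-bL),
            (B (γ + bL - p) * g γ - r * (B (γ + bL - p) * g γ + B (-p - γ - bR) * g γ)) := by
      congr 1; funext γ; ring
    rw [this,
      intervalIntegral.integral_sub hI1 (((hI1.add hI2)).const_mul r),
      intervalIntegral.integral_const_mul,
      intervalIntegral.integral_add hI1 hI2]
  have hAC : 0 < A + C := by linarith
  refine ⟨?_, ?_, ?_, ?_⟩
  · intro a b hlt
    simp only [key]
    nlinarith
  · rw [key 0]; linarith
  · rw [key 1]; linarith
  · refine ⟨A / (A + C), ⟨⟨div_pos hA hAC, (div_lt_one hAC).2 (by linarith)⟩, ?_⟩, ?_⟩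
    · intro r
      rw [key r, gt_iff_lt, sub_pos, lt_div_iff₀ hAC, mul_comm]
    · rintro r' ⟨_, hiff⟩
      have h₀ : ∀ r : ℝ,
          (∫ γ in (-bR)..(-bL), ((1 - r) * B (γ + bL - p) - r * B (-p - γ - bR)) * g γ) > 0
            ↔ r < A / (A + C) := by
        intro r; rw [key r, gt_iff_lt, sub_pos, lt_div_iff₀ hAC, mul_comm]
      by_contra hne
      rcases lt_or_gt_of_ne hne with h | h
      · exact absurd ((hiff r').1 ((h₀ r').2 h)) (lt_irrefl r')
      · exact absurd ((h₀ _).1 ((hiff _).2 h)) (lt_irrefl _)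
end

section
/- Let B be a strictly increasing continuous CDF with values in (0,1), g a probability density with full support, p ∈ ℝ, b_L < 0 ≤ b_R, and define τ(b_L,b_R) = (∫_{−b_R}^{−b_L} B(−p−γ−b_R) g(γ) dγ) / (∫_{−b_R}^{−b_L} B(−p+γ+b_L) g(γ) dγ) for b_R > b_L. Then lim_{b_R → b_L⁺} τ(b_L, b_R) = 1, and τ(b_L, b_R) < B(−p)/B(−p + b_L − b_R) for all b_R > b_L. -/
open MeasureTheory Set intervalIntegral Filter

/-!
On `[-b_R, -b_L]` both integrands of `τ` are `B(⋯) g` with the argument of `B` ranging over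
`[-p + b_L - b_R, -p]`, so both integrals lie between `B(-p + b_L - b_R) G` and `B(-p) G`, where
`G = ∫ g`; the denominator strictly exceeds the lower bound because its integrand reaches
`B(-p) g` at `γ = -b_L`. Hence `B(-p + b_L - b_R) / B(-p) ≤ τ < B(-p) / B(-p + b_L - b_R)`, and
both bounds tend to `1` as `b_R → b_L` by continuity of `B`.
-/

section WeightedBounds

variable {f g : ℝ → ℝ} {a b m M : ℝ}

theorem mul_integral_le_integral_mul (hab : a ≤ b) (hf : ContinuousOn f (Icc a b))
    (hg : ContinuousOn g (Icc a b)) (hg0 : ∀ x ∈ Icc a b, 0 ≤ g x)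
    (hmf : ∀ x ∈ Icc a b, m ≤ f x) :
    m * ∫ x in a..b, g x ≤ ∫ x in a..b, f x * g x := by
  rw [← intervalIntegral.integral_const_mul]
  exact integral_mono_on hab ((continuousOn_const.mul hg).intervalIntegrable_of_Icc hab)
    ((hf.mul hg).intervalIntegrable_of_Icc hab)
    fun x hx => mul_le_mul_of_nonneg_right (hmf x hx) (hg0 x hx)

theorem integral_mul_le_mul_integral (hab : a ≤ b) (hf : ContinuousOn f (Icc a b))
    (hg : ContinuousOn g (Icc a b)) (hg0 : ∀ x ∈ Icc a b, 0 ≤ g x)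
    (hfM : ∀ x ∈ Icc a b, f x ≤ M) :
    ∫ x in a..b, f x * g x ≤ M * ∫ x in a..b, g x := by
  rw [← intervalIntegral.integral_const_mul]
  exact integral_mono_on hab ((hf.mul hg).intervalIntegrable_of_Icc hab)
    ((continuousOn_const.mul hg).intervalIntegrable_of_Icc hab)
    fun x hx => mul_le_mul_of_nonneg_right (hfM x hx) (hg0 x hx)

theorem mul_integral_lt_integral_mul (hab : a < b) (hf : ContinuousOn f (Icc a b))
    (hg : ContinuousOn g (Icc a b)) (hg0 : ∀ x ∈ Icc a b, 0 < g x)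
    (hmf : ∀ x ∈ Icc a b, m ≤ f x) (hlt : ∃ c ∈ Icc a b, m < f c) :
    m * ∫ x in a..b, g x < ∫ x in a..b, f x * g x := by
  rw [← intervalIntegral.integral_const_mul]
  obtain ⟨c, hc, hmc⟩ := hlt
  exact integral_lt_integral_of_continuousOn_of_le_of_exists_lt hab (continuousOn_const.mul hg)
    (hf.mul hg) (fun x hx => mul_le_mul_of_nonneg_right (hmf x (Ioc_subset_Icc_self hx))
      (hg0 x (Ioc_subset_Icc_self hx)).le)
    ⟨c, hc, mul_lt_mul_of_pos_right hmc (hg0 c hc)⟩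

end WeightedBounds

theorem div_mem_Ico_div_div {x y m M G : ℝ} (hm : 0 < m) (hG : 0 < G)
    (hx : x ∈ Icc (m * G) (M * G)) (hy : y ∈ Ioc (m * G) (M * G)) :
    x / y ∈ Ico (m / M) (M / m) := by
  have hy0 : 0 < y := (mul_pos hm hG).trans hy.1
  have hM : 0 < M := pos_of_mul_pos_left (hy0.trans_le hy.2) hG.le
  constructor
  · rw [div_le_div_iff₀ hM hy0]
    nlinarith [hx.1, hy.2]
  · rw [div_lt_div_iff₀ hy0 hm]
    nlinarith [hx.2, hy.1]

noncomputable def referendumRatio (B g : ℝ → ℝ) (p bL bR : ℝ) : ℝ :=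
  (∫ γ in (-bR)..(-bL), B (-p - γ - bR) * g γ) / ∫ γ in (-bR)..(-bL), B (-p + γ + bL) * g γ

section ReferendumRatio

variable {B g : ℝ → ℝ} {p bL bR : ℝ}

theorem referendumRatio_mem_Ico (hBm : StrictMono B) (hBc : Continuous B)
    (hBpos : ∀ x, 0 < B x) (hgc : Continuous g) (hgpos : ∀ x, 0 < g x) (hbR : bL < bR) :
    referendumRatio B g p bL bR ∈ Ico (B (-p + bL - bR) / B (-p)) (B (-p) / B (-p + bL - bR)) := by
  have hab : -bR < -bL := neg_lt_neg hbR
  have hG : 0 < ∫ γ in (-bR)..(-bL), g γ :=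
    intervalIntegral_pos_of_pos (hgc.intervalIntegrable _ _) hgpos hab
  have hN : ContinuousOn (fun γ => B (-p - γ - bR)) (Icc (-bR) (-bL)) := by fun_prop
  have hD : ContinuousOn (fun γ => B (-p + γ + bL)) (Icc (-bR) (-bL)) := by fun_prop
  have hg0 : ∀ γ ∈ Icc (-bR) (-bL), 0 ≤ g γ := fun γ _ => (hgpos γ).le
  apply div_mem_Ico_div_div (hBpos _) hG
  · exact ⟨mul_integral_le_integral_mul hab.le hN hgc.continuousOn hg0
        fun γ hγ => hBm.monotone (by linarith [hγ.2]),
      integral_mul_le_mul_integral hab.le hN hgc.continuousOn hg0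
        fun γ hγ => hBm.monotone (by linarith [hγ.1])⟩
  · exact ⟨mul_integral_lt_integral_mul hab hD hgc.continuousOn (fun γ _ => hgpos γ)
        (fun γ hγ => hBm.monotone (by linarith [hγ.1]))
        ⟨-bL, right_mem_Icc.2 hab.le, hBm (by linarith)⟩,
      integral_mul_le_mul_integral hab.le hD hgc.continuousOn hg0
        fun γ hγ => hBm.monotone (by linarith [hγ.2])⟩

theorem tendsto_referendumRatio_nhdsGT (hBm : StrictMono B) (hBc : Continuous B)
    (hBpos : ∀ x, 0 < B x) (hgc : Continuous g) (hgpos : ∀ x, 0 < g x) :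
    Tendsto (referendumRatio B g p bL) (nhdsWithin bL (Ioi bL)) (nhds 1) := by
  have hc : ContinuousAt (fun bR => B (-p + bL - bR)) bL := by fun_prop
  have h1 : B (-p + bL - bL) = B (-p) := by rw [add_sub_cancel_right]
  have hlo : Tendsto (fun bR => B (-p + bL - bR) / B (-p)) (nhds bL) (nhds 1) := by
    simpa only [h1, div_self (hBpos (-p)).ne'] using (hc.div_const (B (-p))).tendsto
  have hhi : Tendsto (fun bR => B (-p) / B (-p + bL - bR)) (nhds bL) (nhds 1) := by
    simpa only [inv_div, inv_one] using hlo.inv₀ one_ne_zero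
  have hmem : ∀ᶠ bR in nhdsWithin bL (Ioi bL), referendumRatio B g p bL bR ∈
      Ico (B (-p + bL - bR) / B (-p)) (B (-p) / B (-p + bL - bR)) :=
    eventually_mem_nhdsWithin.mono fun bR hbR =>
      referendumRatio_mem_Ico hBm hBc hBpos hgc hgpos hbR
  exact tendsto_of_tendsto_of_tendsto_of_le_of_le'
    (hlo.mono_left nhdsWithin_le_nhds) (hhi.mono_left nhdsWithin_le_nhds)
    (hmem.mono fun _ h => h.1) (hmem.mono fun _ h => h.2.le)

end ReferendumRatio

theorem stmt_19_general (B g : ℝ → ℝ) (hBm : StrictMono B) (hBc : Continuous B)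
    (hB01 : ∀ x, 0 < B x ∧ B x < 1)
    (hgc : Continuous g) (hgpos : ∀ x, 0 < g x)
    (p bL : ℝ) :
    Tendsto (fun bR : ℝ =>
        (∫ γ in (-bR)..(-bL), B (-p - γ - bR) * g γ) /
          (∫ γ in (-bR)..(-bL), B (-p + γ + bL) * g γ))
      (nhdsWithin bL (Ioi bL)) (nhds 1) ∧
    ∀ bR : ℝ, bL < bR →
      (∫ γ in (-bR)..(-bL), B (-p - γ - bR) * g γ) /
          (∫ γ in (-bR)..(-bL), B (-p + γ + bL) * g γ) <
        B (-p) / B (-p + bL - bR) := by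
  have hBpos : ∀ x, 0 < B x := fun x => (hB01 x).1
  exact ⟨tendsto_referendumRatio_nhdsGT hBm hBc hBpos hgc hgpos,
    fun bR hbR => (referendumRatio_mem_Ico hBm hBc hBpos hgc hgpos hbR).2⟩

/-- The ratio τ(b_L,b_R) tends to 1 as b_R → b_L⁺ (L'Hôpital), and is bounded above by
B(−p)/B(−p+b_L−b_R). -/
theorem stmt_19 (B g : ℝ → ℝ) (hBm : StrictMono B) (hBc : Continuous B)
    (hB01 : ∀ x, 0 < B x ∧ B x < 1)
    (hgc : Continuous g) (hgpos : ∀ x, 0 < g x) (hg1 : ∫ x, g x = 1)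
    (p bL : ℝ) (hbL : bL < 0) :
    Tendsto (fun bR : ℝ =>
        (∫ γ in (-bR)..(-bL), B (-p - γ - bR) * g γ) /
          (∫ γ in (-bR)..(-bL), B (-p + γ + bL) * g γ))
      (nhdsWithin bL (Ioi bL)) (nhds 1) ∧
    ∀ bR : ℝ, bL < bR →
      (∫ γ in (-bR)..(-bL), B (-p - γ - bR) * g γ) /
          (∫ γ in (-bR)..(-bL), B (-p + γ + bL) * g γ) <
        B (-p) / B (-p + bL - bR) :=
  stmt_19_general B g hBm hBc hB01 hgc hgpos p bL
end
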